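/- arXiv:2109.15172 — 4 statements merged into one kernel-verified Lean document; each statement's English description precedes it below -/
import Mathlib

section
/- Let (X,d) be a metric space. Then for every isometric embedding f: X → X, the coarse entropy of f equals the coarse entropy of the identity map id_X; in particular, all isometric embeddings of X (and all isometries of X) have the same coarse entropy. -/
open Filter Set Metric
open scoped ENNReal

noncomputable section

/-- `p` represents a `δ`-pseudoorbit of `f` of length `n` starting at `x₀`:
`(p 0, p 1, …, p n)` with `p 0 = x₀` and `dist (f (p i)) (p (i+1)) ≤ δ` for `i < n`.
(Only the values `p 0, …, p n` are relevant.) -/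
def IsPseudoOrbit {X : Type*} [MetricSpace X] (f : X → X) (δ : ℝ) (n : ℕ) (x₀ : X)
    (p : ℕ → X) : Prop :=
  p 0 = x₀ ∧ ∀ i < n, dist (f (p i)) (p (i + 1)) ≤ δ

/-- The distance between two pseudoorbits of length `n`:
the maximum of `dist (p i) (q i)` over `0 ≤ i ≤ n`. -/
def orbitDist {X : Type*} [MetricSpace X] (n : ℕ) (p q : ℕ → X) : ℝ :=
  (Finset.range (n + 1)).sup' (by simp) fun i => dist (p i) (q i)

/-- A family `S` of pseudoorbits of length `n` is `R`-separated if any two distinct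
members are at pseudoorbit distance at least `R`. -/
def IsSepFamily {X : Type*} [MetricSpace X] (n : ℕ) (R : ℝ) (S : Set (ℕ → X)) : Prop :=
  ∀ p ∈ S, ∀ q ∈ S, p ≠ q → R ≤ orbitDist n p q

/-- `sepCard f n R δ x₀` is `s(f,n,R,δ,x₀)`: the supremum of cardinalities of
`R`-separated sets of `δ`-pseudoorbits of `f` of length `n` starting at `x₀`. -/
def sepCard {X : Type*} [MetricSpace X] (f : X → X) (n : ℕ) (R δ : ℝ) (x₀ : X) : ℝ≥0∞ :=
  ⨆ (S : Set (ℕ → X)) (_ : ∀ p ∈ S, IsPseudoOrbit f δ n x₀ p) (_ : IsSepFamily n R S),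
    (S.encard : ℝ≥0∞)

/-- Extended logarithm `[0,∞] → [0,∞]` (negative values are truncated to `0`). -/
def elog (x : ℝ≥0∞) : ℝ≥0∞ :=
  if x = ⊤ then ⊤ else ENNReal.ofReal (Real.log x.toReal)

/-- The coarse entropy of `f : X → X` computed at the basepoint `x₀`:
`h_∞(f) = lim_{δ→∞} lim_{R→∞} limsup_{n→∞} (1/n) log s(f,n,R,δ,x₀)`.
Since `s` is nondecreasing in `δ` and nonincreasing in `R`, the limits in `δ` and `R`
are the supremum over `δ > 0` and the infimum over `R > 0`, respectively. -/
def coarseEntropyAt {X : Type*} [MetricSpace X] (f : X → X) (x₀ : X) : ℝ≥0∞ :=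
  ⨆ (δ : ℝ) (_ : 0 < δ), ⨅ (R : ℝ) (_ : 0 < R),
    Filter.atTop.limsup fun n : ℕ => elog (sepCard f n R δ x₀) / (n : ℝ≥0∞)

end

/-!
Twisting by iterates of `f` moves pseudo-orbits between `f` and `id` without changing distances:
`(p i)ᵢ ↦ (f^[i] (p i))ᵢ` sends `δ`-pseudo-orbits of `id` to `δ`-pseudo-orbits of `f`, and
`(p i)ᵢ ↦ (f^[n - i] (p i))ᵢ` sends those of `f` of length `n` to those of `id` starting at
`f^[n] x₀`. Prefixing a walk from `x₀` to `f^[n] x₀` along the orbit of `x₀`, `K` iterates per step,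
brings them back to `x₀` at the cost of `n / K + 1` extra steps of size at most `K d(x₀, f x₀)`.
Once `δ ≥ K d(x₀, f x₀)` this gives `h(id) ≤ h(f) ≤ (1 + 2 / K) h(id)`, and `K` is arbitrary.
-/

open Topology

lemma elog_mono : Monotone elog := by
  intro x y hxy
  unfold elog
  rcases eq_or_ne y ⊤ with rfl | hy
  · simp
  have hx : x ≠ ⊤ := ne_top_of_le_ne_top hy hxy
  rw [if_neg hx, if_neg hy]
  rcases le_or_gt x.toReal 1 with hx1 | hx1
  · simp [ENNReal.ofReal_of_nonpos (Real.log_nonpos ENNReal.toReal_nonneg hx1)]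
  · exact ENNReal.ofReal_le_ofReal
      (Real.log_le_log (by linarith) ((ENNReal.toReal_le_toReal hx hy).mpr hxy))

lemma ENNReal.le_of_forall_le_one_add_div_mul {x y c : ℝ≥0∞} (hc : c ≠ ⊤)
    (h : ∀ K : ℕ, 0 < K → x ≤ (1 + c / K) * y) : x ≤ y := by
  have hlim : Tendsto (fun K : ℕ => (1 + c / K) * y) atTop (𝓝 y) := by
    have hdiv : Tendsto (fun K : ℕ => c / K) atTop (𝓝 0) := by
      simpa [div_eq_mul_inv] using
        ENNReal.Tendsto.const_mul ENNReal.tendsto_inv_nat_nhds_zero (Or.inr hc)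
    have hsum : Tendsto (fun K : ℕ => 1 + c / K) atTop (𝓝 1) := by
      simpa using tendsto_const_nhds.add hdiv
    simpa using ENNReal.Tendsto.mul_const hsum (.inl one_ne_zero)
  exact ge_of_tendsto hlim (eventually_gt_atTop 0 |>.mono h)

lemma ENNReal.limsup_div_le_mul_limsup_div {u v : ℕ → ℝ≥0∞} {φ : ℕ → ℕ} {a : ℝ≥0∞}
    (ha : a ≠ ⊤) (hφ : Tendsto φ atTop atTop) (huv : ∀ n, u n ≤ v (φ n))
    (hφa : ∀ᶠ n in atTop, (φ n : ℝ≥0∞) ≤ a * n) :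
    limsup (fun n => u n / n) atTop ≤ a * limsup (fun n => v n / n) atTop := by
  have hle : ∀ᶠ n in atTop, u n / n ≤ a * (v (φ n) / φ n) := by
    filter_upwards [hφa, eventually_gt_atTop 0, hφ.eventually_gt_atTop 0] with n hn hn0 hφ0
    have hinv : (n : ℝ≥0∞)⁻¹ ≤ a / φ n := by
      rw [ENNReal.le_div_iff_mul_le (.inl (by simp [hφ0.ne'])) (.inl (by simp)),
        ENNReal.inv_mul_le_iff (by simp [hn0.ne']) (by simp)]
      rwa [mul_comm]
    calc u n / n ≤ v (φ n) * (n : ℝ≥0∞)⁻¹ := ENNReal.div_le_div_right (huv n) _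
      _ ≤ v (φ n) * (a / φ n) := mul_le_mul_right hinv _
      _ = a * (v (φ n) / φ n) := by simp only [div_eq_mul_inv]; ring
  calc limsup (fun n => u n / n) atTop
      ≤ limsup (fun n => a * (v (φ n) / φ n)) atTop := limsup_le_limsup hle
    _ = a * limsup ((fun n => v n / n) ∘ φ) atTop := ENNReal.limsup_const_mul_of_ne_top ha
    _ ≤ a * limsup (fun n => v n / n) atTop := mul_le_mul_right hφ.limsup_comp_le_limsup a

lemma ENNReal.natCast_div_add_one_add_le {n K : ℕ} (hK : 0 < K) (hKn : K ≤ n) :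
    ((n / K + 1 + n : ℕ) : ℝ≥0∞) ≤ (1 + 2 / K) * n := by
  have hquot : ((n / K + 1 : ℕ) : ℝ≥0∞) ≤ 2 * n / K := by
    rw [ENNReal.le_div_iff_mul_le (.inl (by simp [hK.ne'])) (.inl (by simp))]
    have := Nat.div_mul_le_self n K
    exact_mod_cast (show (n / K + 1) * K ≤ 2 * n by rw [add_mul]; omega)
  calc ((n / K + 1 + n : ℕ) : ℝ≥0∞) = n + ((n / K + 1 : ℕ) : ℝ≥0∞) := by push_cast; ring
    _ ≤ n + 2 * n / K := by gcongr
    _ = (1 + 2 / K) * n := by simp only [div_eq_mul_inv]; ring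

section

variable {X : Type*}

def appendOrbit (m : ℕ) (q r : ℕ → X) : ℕ → X :=
  fun j => if j < m then q j else r (j - m)

@[simp]
lemma appendOrbit_add (m : ℕ) (q r : ℕ → X) (i : ℕ) : appendOrbit m q r (m + i) = r i := by
  simp [appendOrbit]

lemma appendOrbit_injective (m : ℕ) (q : ℕ → X) : Function.Injective (appendOrbit m q) :=
  fun r r' h => funext fun i => by simpa using congrFun h (m + i)

variable [MetricSpace X]

namespace IsPseudoOrbit

variable {f : X → X} {δ δ' : ℝ} {m n : ℕ} {x₀ : X} {p q r : ℕ → X}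

lemma mono (hp : IsPseudoOrbit f δ n x₀ p) (h : δ ≤ δ') : IsPseudoOrbit f δ' n x₀ p :=
  ⟨hp.1, fun i hi => (hp.2 i hi).trans h⟩

lemma append (hq : IsPseudoOrbit f δ m x₀ q) (hr : IsPseudoOrbit f δ n (q m) r) :
    IsPseudoOrbit f δ (m + n) x₀ (appendOrbit m q r) := by
  refine ⟨?_, fun i hi => ?_⟩
  · rcases Nat.eq_zero_or_pos m with rfl | hm
    · simpa [appendOrbit, hq.1] using hr.1
    · simpa [appendOrbit, hm] using hq.1
  · rcases lt_trichotomy (i + 1) m with hlt | heq | hgt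
    · simpa [appendOrbit, hlt, (Nat.lt_succ_self i).trans hlt] using hq.2 i (by omega)
    · have hstep := hq.2 i (by omega)
      rw [heq, ← hr.1] at hstep
      simpa [appendOrbit, heq, Nat.lt_of_succ_le heq.le] using hstep
    · obtain ⟨k, rfl⟩ : ∃ k, i = m + k := ⟨i - m, by omega⟩
      simpa [appendOrbit, Nat.add_assoc] using hr.2 k (by omega)

end IsPseudoOrbit

namespace Isometry

variable {f : X → X} {δ : ℝ} {n : ℕ} {x₀ : X} {p : ℕ → X}

lemma iterate (hf : Isometry f) (i : ℕ) : Isometry f^[i] := by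
  induction i with
  | zero => exact isometry_id
  | succ i ih => rw [Function.iterate_succ']; exact hf.comp ih

lemma dist_iterate_le (hf : Isometry f) (x : X) (i : ℕ) :
    dist x (f^[i] x) ≤ i * dist x (f x) := by
  have hstep : ∀ k, dist (f^[k] x) (f^[k] (f x)) = dist x (f x) := fun k =>
    (hf.iterate k).dist_eq _ _
  simpa [hstep] using dist_le_range_sum_dist (fun k => f^[k] x) i

lemma isPseudoOrbit_iterate (hf : Isometry f) (hp : IsPseudoOrbit id δ n x₀ p) :
    IsPseudoOrbit f δ n x₀ (fun i => f^[i] (p i)) := by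
  refine ⟨by simpa using hp.1, fun i hi => ?_⟩
  rw [← Function.iterate_succ_apply' f i, (hf.iterate (i + 1)).dist_eq]
  exact hp.2 i hi

lemma isPseudoOrbit_id_iterate_sub (hf : Isometry f) (hp : IsPseudoOrbit f δ n x₀ p) :
    IsPseudoOrbit id δ n (f^[n] x₀) (fun i => f^[n - i] (p i)) := by
  refine ⟨by simp [hp.1], fun i hi => ?_⟩
  dsimp only [id]
  rw [show n - i = n - (i + 1) + 1 by omega, Function.iterate_succ_apply,
    (hf.iterate _).dist_eq]
  exact hp.2 i hi

lemma isPseudoOrbit_id_orbit {K m : ℕ} (hf : Isometry f) (hK : K * dist x₀ (f x₀) ≤ δ) :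
    IsPseudoOrbit id δ m x₀ (fun j => f^[min (j * K) n] x₀) := by
  refine ⟨by simp, fun j _ => ?_⟩
  obtain ⟨a, b, ha, hb, hab, hbaK⟩ : ∃ a b, min (j * K) n = a ∧ min ((j + 1) * K) n = b ∧
      a ≤ b ∧ b - a ≤ K := by
    refine ⟨_, _, rfl, rfl, ?_⟩
    rw [Nat.succ_mul]
    omega
  dsimp only [id]
  rw [ha, hb, show b = a + (b - a) by omega, Function.iterate_add_apply, (hf.iterate a).dist_eq]
  calc dist x₀ (f^[b - a] x₀) ≤ (b - a : ℕ) * dist x₀ (f x₀) := hf.dist_iterate_le x₀ _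
    _ ≤ K * dist x₀ (f x₀) := by gcongr
    _ ≤ δ := hK

end Isometry

lemma orbitDist_le_orbitDist {n n' : ℕ} {p q p' q' : ℕ → X} (e : ℕ → ℕ) (he : ∀ i ≤ n, e i ≤ n')
    (h : ∀ i ≤ n, dist (p i) (q i) ≤ dist (p' (e i)) (q' (e i))) :
    orbitDist n p q ≤ orbitDist n' p' q' :=
  Finset.sup'_le _ _ fun i hi => (h i (Finset.mem_range_succ_iff.mp hi)).trans <|
    Finset.le_sup' (fun j => dist (p' j) (q' j))
      (Finset.mem_range_succ_iff.mpr (he i (Finset.mem_range_succ_iff.mp hi)))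

lemma sepCard_le_sepCard {f g : X → X} {n n' : ℕ} {R δ δ' : ℝ} {x₀ y₀ : X}
    (Φ : (ℕ → X) → (ℕ → X)) (hΦ : Function.Injective Φ)
    (horbit : ∀ p, IsPseudoOrbit f δ n x₀ p → IsPseudoOrbit g δ' n' y₀ (Φ p))
    (hdist : ∀ p q, orbitDist n p q ≤ orbitDist n' (Φ p) (Φ q)) :
    sepCard f n R δ x₀ ≤ sepCard g n' R δ' y₀ := by
  refine iSup₂_le fun S hS => iSup_le fun hsep => ?_
  have hS' : ∀ p ∈ Φ '' S, IsPseudoOrbit g δ' n' y₀ p := by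
    rintro _ ⟨p, hp, rfl⟩
    exact horbit p (hS p hp)
  have hsep' : IsSepFamily n' R (Φ '' S) := by
    rintro _ ⟨p, hp, rfl⟩ _ ⟨q, hq, rfl⟩ hne
    exact (hsep p hp q hq (ne_of_apply_ne Φ hne)).trans (hdist p q)
  rw [← hΦ.injOn.encard_image]
  exact le_iSup₂_of_le (Φ '' S) hS' (le_iSup_of_le hsep' le_rfl)

namespace Isometry

variable {f : X → X} {n : ℕ} {R δ : ℝ} {x₀ : X}

lemma sepCard_id_le (hf : Isometry f) : sepCard id n R δ x₀ ≤ sepCard f n R δ x₀ :=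
  sepCard_le_sepCard (fun p i => f^[i] (p i))
    (fun _ _ h => funext fun i => (hf.iterate i).injective (congrFun h i))
    (fun _ => hf.isPseudoOrbit_iterate)
    (fun _ _ => orbitDist_le_orbitDist id (fun _ h => h)
      (fun i _ => ((hf.iterate i).dist_eq _ _).ge))

lemma sepCard_le_sepCard_id {δ' : ℝ} {K m : ℕ} (hf : Isometry f) (hδ : δ ≤ δ')
    (hK : K * dist x₀ (f x₀) ≤ δ') (hm : n ≤ m * K) :
    sepCard f n R δ x₀ ≤ sepCard id (m + n) R δ' x₀ := by
  set walk : ℕ → X := fun j => f^[min (j * K) n] x₀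
  refine sepCard_le_sepCard (fun p => appendOrbit m walk fun i => f^[n - i] (p i))
    ((appendOrbit_injective m walk).comp fun _ _ h =>
      funext fun i => (hf.iterate _).injective (congrFun h i))
    (fun _ hp => ?_) (fun _ _ => ?_)
  · refine (hf.isPseudoOrbit_id_orbit hK).append ?_
    rw [min_eq_right hm]
    exact (hf.isPseudoOrbit_id_iterate_sub hp).mono hδ
  · refine orbitDist_le_orbitDist (m + ·) (fun _ _ => by omega) fun _ _ => ?_
    simp only [appendOrbit_add, (hf.iterate _).dist_eq, le_rfl]

end Isometry

noncomputable def sepGrowthRate (f : X → X) (R δ : ℝ) (x₀ : X) : ℝ≥0∞ :=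
  limsup (fun n : ℕ => elog (sepCard f n R δ x₀) / n) atTop

lemma coarseEntropyAt_eq_iSup_iInf (f : X → X) (x₀ : X) :
    coarseEntropyAt f x₀ = ⨆ (δ : ℝ) (_ : 0 < δ), ⨅ (R : ℝ) (_ : 0 < R), sepGrowthRate f R δ x₀ :=
  rfl

namespace Isometry

variable {f : X → X}

lemma coarseEntropyAt_id_le (hf : Isometry f) (x₀ : X) :
    coarseEntropyAt id x₀ ≤ coarseEntropyAt f x₀ :=
  iSup₂_mono fun _ _ => iInf₂_mono fun _ _ => limsup_le_limsup <| .of_forall fun _ =>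
    ENNReal.div_le_div_right (elog_mono hf.sepCard_id_le) _

lemma sepGrowthRate_le_mul_id (hf : Isometry f) {x₀ : X} {R δ δ' : ℝ} {K : ℕ} (hK : 0 < K)
    (hδ : δ ≤ δ') (hKδ : K * dist x₀ (f x₀) ≤ δ') :
    sepGrowthRate f R δ x₀ ≤ (1 + 2 / K) * sepGrowthRate id R δ' x₀ :=
  ENNReal.limsup_div_le_mul_limsup_div
    (by simp [ENNReal.div_eq_top, hK.ne'])
    (tendsto_atTop_mono (fun n => Nat.le_add_left n _) tendsto_id)
    (fun _ => elog_mono (hf.sepCard_le_sepCard_id hδ hKδ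
      (Nat.lt_mul_of_div_lt (Nat.lt_succ_self _) hK).le))
    ((eventually_ge_atTop K).mono fun _ hn => ENNReal.natCast_div_add_one_add_le hK hn)

lemma coarseEntropyAt_le_mul_id (hf : Isometry f) (x₀ : X) {K : ℕ} (hK : 0 < K) :
    coarseEntropyAt f x₀ ≤ (1 + 2 / K) * coarseEntropyAt id x₀ := by
  simp only [coarseEntropyAt_eq_iSup_iInf]
  refine iSup₂_le fun δ hδ => ?_
  set δ' := max δ (K * dist x₀ (f x₀))
  calc ⨅ (R : ℝ) (_ : 0 < R), sepGrowthRate f R δ x₀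
      ≤ ⨅ (R : ℝ) (_ : 0 < R), (1 + 2 / K) * sepGrowthRate id R δ' x₀ :=
        iInf₂_mono fun _ _ => hf.sepGrowthRate_le_mul_id hK (le_max_left _ _) (le_max_right _ _)
    _ = (1 + 2 / K) * ⨅ (R : ℝ) (_ : 0 < R), sepGrowthRate id R δ' x₀ := by
        simp only [ENNReal.mul_iInf_of_ne (a := 1 + 2 / K) (by simp)
          (by simp [ENNReal.div_eq_top, hK.ne'])]
    _ ≤ (1 + 2 / K) *
          ⨆ (δ : ℝ) (_ : 0 < δ), ⨅ (R : ℝ) (_ : 0 < R), sepGrowthRate id R δ x₀ := by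
        gcongr
        exact le_iSup₂_of_le δ' (hδ.trans_le (le_max_left _ _)) le_rfl

lemma coarseEntropyAt_eq_id (hf : Isometry f) (x₀ : X) :
    coarseEntropyAt f x₀ = coarseEntropyAt id x₀ :=
  le_antisymm (ENNReal.le_of_forall_le_one_add_div_mul (by simp) fun _ =>
    hf.coarseEntropyAt_le_mul_id x₀) (hf.coarseEntropyAt_id_le x₀)

end Isometry

end

/-- For a metric space `X`, the coarse entropy of any isometric embedding
`f : X → X` equals the coarse entropy of the identity map; in particular all isometric
embeddings of `X` (and all isometries) have the same coarse entropy. -/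
theorem coarseEntropy_isometricEmbedding_eq_id {X : Type*} [MetricSpace X]
    (f : X → X) (hf : Isometry f) (x₀ : X) :
    coarseEntropyAt f x₀ = coarseEntropyAt (id : X → X) x₀ ∧
    ∀ g : X → X, Isometry g → coarseEntropyAt f x₀ = coarseEntropyAt g x₀ :=
  ⟨hf.coarseEntropyAt_eq_id x₀, fun _ hg => by
    rw [hf.coarseEntropyAt_eq_id, hg.coarseEntropyAt_eq_id]⟩
end

section
/- Let X be a normed vector space over ℝ of infinite dimension. Then the coarse entropy of X is infinite: h_∞(X) = ∞. -/
open Filter Set Metric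
open scoped ENNReal

/-!
In an infinite-dimensional normed space, Riesz's lemma gives a bounded sequence `v j` whose
terms are pairwise at distance at least `1`. With step size `δ ≥ sup ‖v j‖`, the paths that walk
`m ≥ R` steps along `v j` and then stay put are `δ`-paths which are pairwise `R`-separated, since
at time `m` they are `m ‖v j - v k‖ ≥ R` apart. So for every `n ≥ m` there are infinitely many
`R`-separated `δ`-paths of length `n`, and already the term `log s(n, R, δ, x₀) / n` is infinite.
-/

section MetricSpace

variable {X : Type*} [MetricSpace X]

lemma dist_le_orbitDist {n i : ℕ} (hi : i ≤ n) (p q : ℕ → X) :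
    dist (p i) (q i) ≤ orbitDist n p q :=
  Finset.le_sup' (fun i => dist (p i) (q i)) (Finset.mem_range_succ_iff.mpr hi)

lemma sepCard_eq_top_of_infinite {f : X → X} {n : ℕ} {R δ : ℝ} {x₀ : X} {S : Set (ℕ → X)}
    (hS : S.Infinite) (horb : ∀ p ∈ S, IsPseudoOrbit f δ n x₀ p) (hsep : IsSepFamily n R S) :
    sepCard f n R δ x₀ = ⊤ := by
  refine eq_top_iff.mpr ?_
  calc (⊤ : ℝ≥0∞) = (S.encard : ℝ≥0∞) := by rw [hS.encard_eq, ENat.toENNReal_top]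
    _ ≤ sepCard f n R δ x₀ := le_iSup₂_of_le S horb (le_iSup_of_le hsep le_rfl)

lemma coarseEntropyAt_eq_top_of_eventually_sepCard_eq_top {f : X → X} {x₀ : X} {δ : ℝ}
    (hδ : 0 < δ) (h : ∀ R > 0, ∀ᶠ n in atTop, sepCard f n R δ x₀ = ⊤) :
    coarseEntropyAt f x₀ = ⊤ := by
  refine eq_top_iff.mpr (le_iSup₂_of_le δ hδ (le_iInf₂ fun R hR => ?_))
  have htop : (fun n : ℕ => elog (sepCard f n R δ x₀) / n) =ᶠ[atTop] fun _ => ⊤ := by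
    filter_upwards [h R hR] with n hn
    rw [hn, elog, if_pos rfl]
    exact ENNReal.top_div_of_ne_top (ENNReal.natCast_ne_top n)
  rw [limsup_congr htop, limsup_const]

end MetricSpace

section NormedSpace

def stoppedRay {E : Type*} [AddCommMonoid E] (x₀ v : E) (m i : ℕ) : E :=
  x₀ + min i m • v

lemma isPseudoOrbit_id_stoppedRay {E : Type*} [NormedAddCommGroup E] {x₀ v : E} {δ : ℝ}
    (hv : ‖v‖ ≤ δ) (m n : ℕ) : IsPseudoOrbit id δ n x₀ (stoppedRay x₀ v m) := by
  refine ⟨by simp [stoppedRay], fun i _ => ?_⟩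
  rw [id, stoppedRay, stoppedRay, dist_comm, dist_add_left, dist_eq_norm]
  rcases lt_or_ge i m with him | him
  · rw [min_eq_left him.le, min_eq_left him, succ_nsmul, add_sub_cancel_left]
    exact hv
  · rw [min_eq_right him, min_eq_right (by omega), sub_self, norm_zero]
    exact (norm_nonneg v).trans hv

lemma dist_stoppedRay_self {E : Type*} [NormedAddCommGroup E] [NormedSpace ℝ E]
    (x₀ v w : E) (m : ℕ) :
    dist (stoppedRay x₀ v m m) (stoppedRay x₀ w m m) = m * ‖v - w‖ := by
  rw [stoppedRay, stoppedRay, min_self, dist_add_left, dist_eq_norm, ← nsmul_sub,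
    RCLike.norm_nsmul ℝ, nsmul_eq_mul]

lemma sepCard_id_eq_top_of_pairwise_one_le_norm_sub {E : Type*} [NormedAddCommGroup E]
    [NormedSpace ℝ E] {v : ℕ → E} {δ : ℝ} (hv : ∀ j, ‖v j‖ ≤ δ)
    (hsep : Pairwise fun j k => 1 ≤ ‖v j - v k‖) {R : ℝ} (hR : 0 < R) {m n : ℕ}
    (hRm : R ≤ m) (hmn : m ≤ n) (x₀ : E) : sepCard id n R δ x₀ = ⊤ := by
  set P : ℕ → ℕ → E := fun j => stoppedRay x₀ (v j) m
  have hfar : Pairwise fun j k => R ≤ dist (P j m) (P k m) := fun j k hjk =>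
    calc R ≤ m * 1 := by rwa [mul_one]
      _ ≤ m * ‖v j - v k‖ := by gcongr; exact hsep hjk
      _ = dist (P j m) (P k m) := (dist_stoppedRay_self x₀ (v j) (v k) m).symm
  have hP : Function.Injective P := fun j k hjk => by
    by_contra hne
    have hRle : R ≤ dist (P j m) (P k m) := hfar hne
    rw [hjk, dist_self] at hRle
    linarith
  refine sepCard_eq_top_of_infinite (Set.infinite_range_of_injective hP) ?_ ?_
  · rintro _ ⟨j, rfl⟩
    exact isPseudoOrbit_id_stoppedRay (hv j) m n
  · rintro _ ⟨j, rfl⟩ _ ⟨k, rfl⟩ hne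
    exact (hfar fun hjk => hne (congrArg P hjk)).trans (dist_le_orbitDist hmn _ _)

end NormedSpace

/-- An infinite-dimensional normed vector space over `ℝ` has infinite
coarse entropy (at every basepoint; the coarse entropy of the space is the coarse
entropy of the identity map). -/
theorem coarseEntropy_of_infinite_dimensional {E : Type*} [NormedAddCommGroup E]
    [NormedSpace ℝ E] (h : ¬ FiniteDimensional ℝ E) (x₀ : E) :
    coarseEntropyAt (id : E → E) x₀ = ⊤ := by
  obtain ⟨δ, v, hδ, hv, hsep⟩ := exists_seq_norm_le_one_le_norm_sub h
  refine coarseEntropyAt_eq_top_of_eventually_sepCard_eq_top (zero_lt_one.trans hδ)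
    fun R hR => ?_
  filter_upwards [eventually_ge_atTop ⌈R⌉₊] with n hn
  exact sepCard_id_eq_top_of_pairwise_one_le_norm_sub hv hsep hR (Nat.le_ceil R) hn x₀
end

section
/- The following conditions are equivalent for a metric space X: (i) there exists s > 0 such that for every D > 0 there exists a constant C'(D) ∈ ℕ such that every s-separated subset of X of diameter at most D has cardinality at most C'(D); (ii) X contains a coarsely dense subset with bounded geometry; (iii) X is quasi-isometric to a metric space with bounded geometry; (iv) X is coarsely equivalent to a metric space with bounded geometry. -/
/-!
A maximal `s`-separated subset `Z` of `X` is `s`-dense, and under (i) every closed ball of `Z`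
of radius `r` is an `s`-separated set of diameter at most `2r`, so `Z` has bounded geometry.
Projecting `X` to a point of an `A`-dense subset within distance `A` is a `(1, 2A)`-quasi-isometry,
and quasi-isometries are coarse equivalences. Conversely, a coarse embedding `f` into a space of
bounded geometry is injective on `s`-separated sets once `ρminus(s) > 0`, and sends a set of diameter
at most `D` into a closed ball of radius `ρplus(D)`.
-/

open Filter Set Metric

/-- A metric space has bounded geometry if for every radius `r > 0` there is a uniform
bound `C(r) ∈ ℕ` on the cardinalities of closed balls of radius `r`. -/
def HasBoundedGeometry (X : Type*) [MetricSpace X] : Prop :=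
  ∀ r : ℝ, 0 < r → ∃ C : ℕ, ∀ x : X, (Metric.closedBall x r).encard ≤ C

/-- `f : X → Y` is a coarse embedding. -/
def IsCoarseEmbedding {X Y : Type*} [MetricSpace X] [MetricSpace Y] (f : X → Y) : Prop :=
  ∃ ρminus ρplus : ℝ → ℝ, Monotone ρminus ∧ Monotone ρplus ∧
    Filter.Tendsto ρminus Filter.atTop Filter.atTop ∧
    ∀ x x' : X, ρminus (dist x x') ≤ dist (f x) (f x') ∧
      dist (f x) (f x') ≤ ρplus (dist x x')

/-- `f : X → Y` is a coarse equivalence: a coarse embedding with coarsely dense image. -/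
def IsCoarseEquiv {X Y : Type*} [MetricSpace X] [MetricSpace Y] (f : X → Y) : Prop :=
  IsCoarseEmbedding f ∧ ∃ A : ℝ, 0 ≤ A ∧ ∀ y : Y, ∃ x : X, dist y (f x) < A

/-- `f : X → Y` is a quasi-isometry: a `(C,A)`-quasi-isometric embedding whose image is
`A`-dense, for some `C ≥ 1`, `A ≥ 0`. -/
def IsQuasiIsometry {X Y : Type*} [MetricSpace X] [MetricSpace Y] (f : X → Y) : Prop :=
  ∃ C A : ℝ, 1 ≤ C ∧ 0 ≤ A ∧
    (∀ x x' : X, C⁻¹ * dist x x' - A ≤ dist (f x) (f x') ∧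
      dist (f x) (f x') ≤ C * dist x x' + A) ∧
    ∀ y : Y, ∃ x : X, dist y (f x) ≤ A

/-- Condition (i) of the theorem, at the separation scale `s`. -/
def HasBoundedGeometryAtScale (X : Type*) [MetricSpace X] (s : ℝ) : Prop :=
  ∀ D : ℝ, 0 < D → ∃ C : ℕ, ∀ T : Set X, T.Pairwise (fun x y => s ≤ dist x y) →
    (∀ x ∈ T, ∀ y ∈ T, dist x y ≤ D) → T.encard ≤ C

theorem Set.exists_maximal_pairwise {α : Type*} (r : α → α → Prop) :
    ∃ Z : Set α, Maximal (fun T : Set α => T.Pairwise r) Z :=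
  zorn_subset {T : Set α | T.Pairwise r} fun c hc hchain =>
    ⟨⋃₀ c, (pairwise_sUnion hchain.directedOn).2 hc, fun _ => subset_sUnion_of_mem⟩

section

variable {X Y : Type*} [MetricSpace X] [MetricSpace Y]

theorem exists_pairwise_le_dist_forall_exists_dist_lt {s : ℝ} (hs : 0 < s) :
    ∃ Z : Set X, Z.Pairwise (fun x y => s ≤ dist x y) ∧ ∀ x, ∃ z ∈ Z, dist x z < s := by
  obtain ⟨Z, hZ⟩ := exists_maximal_pairwise fun x y : X => s ≤ dist x y
  refine ⟨Z, hZ.prop, fun x => ?_⟩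
  by_contra! hfar
  have hxZ : x ∈ Z := hZ.mem_of_prop_insert <| pairwise_insert.2
    ⟨hZ.prop, fun z hz _ => ⟨hfar z hz, (dist_comm z x).symm ▸ hfar z hz⟩⟩
  linarith [hfar x hxZ, dist_self x]

theorem HasBoundedGeometryAtScale.hasBoundedGeometry_of_pairwise {s : ℝ}
    (hX : HasBoundedGeometryAtScale X s) {Z : Set X}
    (hZ : Z.Pairwise fun x y => s ≤ dist x y) : HasBoundedGeometry Z := by
  intro r hr
  obtain ⟨C, hC⟩ := hX (2 * r) (by positivity)
  refine ⟨C, fun z => ?_⟩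
  rw [← Subtype.val_injective.injOn.encard_image]
  refine hC _ (hZ.mono (Subtype.coe_image_subset Z _)) ?_
  rintro _ ⟨a, ha, rfl⟩ _ ⟨b, hb, rfl⟩
  have haz : dist (a : X) z ≤ r := ha
  have hbz : dist (b : X) z ≤ r := hb
  linarith [dist_triangle_right (a : X) b z]

theorem isQuasiIsometry_of_forall_dist_le {Z : Set X} {A : ℝ} (hA : 0 ≤ A) (g : X → Z)
    (hg : ∀ x : X, dist x (g x : X) ≤ A) : IsQuasiIsometry g := by
  refine ⟨1, 2 * A, le_rfl, by positivity, fun x x' => ?_, fun z => ⟨z, ?_⟩⟩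
  · have hlower := dist_triangle4 x (g x) (g x') x'
    have hupper := dist_triangle4 (g x : X) x x' (g x')
    rw [dist_comm (g x' : X)] at hlower
    rw [dist_comm (g x : X) x] at hupper
    simp only [inv_one, one_mul, Subtype.dist_eq]
    constructor <;> linarith [hg x, hg x']
  · linarith [hg z, show dist z (g z) = dist (z : X) (g z : X) from rfl]

theorem exists_isQuasiIsometry_subtype_of_forall_exists_dist_lt {Z : Set X} {A : ℝ}
    (hA : 0 ≤ A) (hZ : ∀ x, ∃ z ∈ Z, dist x z < A) : ∃ g : X → Z, IsQuasiIsometry g := by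
  choose g hgZ hg using hZ
  exact ⟨fun x => ⟨g x, hgZ x⟩, isQuasiIsometry_of_forall_dist_le hA _ fun x => (hg x).le⟩

theorem IsQuasiIsometry.isCoarseEquiv {f : X → Y} (hf : IsQuasiIsometry f) :
    IsCoarseEquiv f := by
  obtain ⟨C, A, hC, hA, hdist, hdense⟩ := hf
  have hC₀ : 0 < C := one_pos.trans_le hC
  refine ⟨⟨fun r => C⁻¹ * r - A, fun r => C * r + A, fun a b hab => ?_, fun a b hab => ?_,
    ?_, hdist⟩, A + 1, by positivity, fun y => ?_⟩
  · have : C⁻¹ * a ≤ C⁻¹ * b := mul_le_mul_of_nonneg_left hab (inv_nonneg.2 hC₀.le)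
    linarith
  · have : C * a ≤ C * b := mul_le_mul_of_nonneg_left hab hC₀.le
    linarith
  · exact tendsto_atTop_add_const_right _ (-A) (tendsto_id.const_mul_atTop (inv_pos.2 hC₀))
  · obtain ⟨x, hx⟩ := hdense y
    exact ⟨x, by linarith⟩

theorem IsCoarseEmbedding.exists_hasBoundedGeometryAtScale {f : X → Y}
    (hf : IsCoarseEmbedding f) (hY : HasBoundedGeometry Y) :
    ∃ s, 0 < s ∧ HasBoundedGeometryAtScale X s := by
  obtain ⟨ρminus, ρplus, hρminus, hρplus, htendsto, hdist⟩ := hf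
  obtain ⟨s, hρs, hs⟩ := ((htendsto.eventually_gt_atTop 0).and (eventually_ge_atTop 1)).exists
  refine ⟨s, one_pos.trans_le hs, fun D _ => ?_⟩
  obtain ⟨C, hC⟩ := hY (max (ρplus D) 1) (one_pos.trans_le (le_max_right _ _))
  refine ⟨C, fun T hT hdiam => ?_⟩
  obtain rfl | ⟨t₀, ht₀⟩ := T.eq_empty_or_nonempty
  · simp
  have hinj : InjOn f T := fun x hx y hy hxy => by
    by_contra hne
    have := (hρminus (hT hx hy hne)).trans (hdist x y).1
    rw [hxy, dist_self] at this
    linarith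
  rw [← hinj.encard_image]
  refine (encard_mono ?_).trans (hC (f t₀))
  rintro _ ⟨t, ht, rfl⟩
  exact mem_closedBall.2 <|
    ((hdist t t₀).2.trans (hρplus (hdiam t ht t₀ ht₀))).trans (le_max_left _ _)

end

/-- The following are equivalent for a metric space `X`:
(i) there is `s > 0` such that for every `D > 0` there is `C'(D) ∈ ℕ` bounding the
cardinality of every `s`-separated subset of `X` of diameter at most `D`;
(ii) `X` contains a coarsely dense subset with bounded geometry;
(iii) `X` is quasi-isometric to a metric space with bounded geometry;
(iv) `X` is coarsely equivalent to a metric space with bounded geometry. -/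
theorem tfae_coarselyEquiv_boundedGeometry {X : Type u} [MetricSpace X] :
    List.TFAE
      [ ∃ s : ℝ, 0 < s ∧ ∀ D : ℝ, 0 < D → ∃ C : ℕ, ∀ T : Set X,
          (∀ x ∈ T, ∀ y ∈ T, x ≠ y → s ≤ dist x y) →
          (∀ x ∈ T, ∀ y ∈ T, dist x y ≤ D) → T.encard ≤ C,
        ∃ Z : Set X, (∃ A : ℝ, 0 ≤ A ∧ ∀ x : X, ∃ z ∈ Z, dist x z < A) ∧
          HasBoundedGeometry Z,
        ∃ (Y : Type u) (mY : MetricSpace Y), @HasBoundedGeometry Y mY ∧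
          ∃ f : X → Y, @IsQuasiIsometry X Y _ mY f,
        ∃ (Y : Type u) (mY : MetricSpace Y), @HasBoundedGeometry Y mY ∧
          ∃ f : X → Y, @IsCoarseEquiv X Y _ mY f ] := by
  tfae_have 1 → 2 := by
    rintro ⟨s, hs, hX⟩
    obtain ⟨Z, hZ, hdense⟩ := exists_pairwise_le_dist_forall_exists_dist_lt (X := X) hs
    exact ⟨Z, ⟨s, hs.le, hdense⟩,
      HasBoundedGeometryAtScale.hasBoundedGeometry_of_pairwise hX hZ⟩
  tfae_have 2 → 3 := fun ⟨Z, ⟨_, hA, hdense⟩, hZ⟩ =>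
    ⟨Z, inferInstance, hZ, exists_isQuasiIsometry_subtype_of_forall_exists_dist_lt hA hdense⟩
  tfae_have 3 → 4 := fun ⟨Y, mY, hY, f, hf⟩ => ⟨Y, mY, hY, f, hf.isCoarseEquiv⟩
  tfae_have 4 → 1 := fun ⟨_, _, hY, _, hf⟩ => hf.1.exists_hasBoundedGeometryAtScale hY
  tfae_finish
end

section
/- Let X be a metric space such that for every δ > 0 every δ-component of X is bounded. Then the coarse entropy of X is zero: h_∞(X) = 0. -/
/-!
For the identity map, a `δ`-pseudo-orbit starting at `x₀` never leaves the `δ`-component of `x₀`.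
If that component is bounded, then as soon as `R` exceeds its diameter any two such pseudo-orbits
are closer than `R`, so an `R`-separated family has at most one member. Hence `s(n, R, δ, x₀) ≤ 1`
and `log s(n, R, δ, x₀) = 0` for every `n`.
-/

open Filter Set Metric
open scoped ENNReal

/-- The `δ`-component of `x`: all points connected to `x` by some `δ`-path. -/
def deltaComponent {X : Type*} [MetricSpace X] (δ : ℝ) (x : X) : Set X :=
  {y | ∃ (n : ℕ) (p : ℕ → X), p 0 = x ∧ p n = y ∧ ∀ i < n, dist (p i) (p (i + 1)) ≤ δ}

section PseudoOrbit

variable {X : Type*} [MetricSpace X]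

lemma orbitDist_le {n : ℕ} {p q : ℕ → X} {D : ℝ} (h : ∀ i ≤ n, dist (p i) (q i) ≤ D) :
    orbitDist n p q ≤ D :=
  Finset.sup'_le _ _ fun i hi => h i (Nat.lt_succ_iff.mp (Finset.mem_range.mp hi))

lemma IsSepFamily.encard_le_one {n : ℕ} {R : ℝ} {S : Set (ℕ → X)} (hS : IsSepFamily n R S)
    (hlt : ∀ p ∈ S, ∀ q ∈ S, orbitDist n p q < R) : S.encard ≤ 1 :=
  Set.encard_le_one_iff.mpr fun p q hp hq =>
    by_contra fun hne => (hS p hp q hq hne).not_gt (hlt p hp q hq)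

lemma sepCard_le_one {f : X → X} {n : ℕ} {R δ : ℝ} {x₀ : X}
    (h : ∀ p q, IsPseudoOrbit f δ n x₀ p → IsPseudoOrbit f δ n x₀ q → orbitDist n p q < R) :
    sepCard f n R δ x₀ ≤ 1 :=
  iSup₂_le fun _ hS => iSup_le fun hsep => by
    exact_mod_cast hsep.encard_le_one fun p hp q hq => h p q (hS p hp) (hS q hq)

lemma elog_eq_zero_of_le_one {x : ℝ≥0∞} (hx : x ≤ 1) : elog x = 0 := by
  have hx_ne_top : x ≠ ⊤ := ne_top_of_le_ne_top ENNReal.one_ne_top hx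
  have hx_real : x.toReal ≤ 1 := ENNReal.toReal_le_of_le_ofReal zero_le_one (by simpa using hx)
  rw [elog, if_neg hx_ne_top, ENNReal.ofReal_eq_zero]
  exact Real.log_nonpos ENNReal.toReal_nonneg hx_real

lemma coarseEntropyAt_eq_zero_of_sepCard_le_one {f : X → X} {x₀ : X}
    (h : ∀ δ > 0, ∃ R > 0, ∀ n, sepCard f n R δ x₀ ≤ 1) : coarseEntropyAt f x₀ = 0 := by
  refine le_antisymm (iSup₂_le fun δ hδ => ?_) zero_le
  obtain ⟨R, hR, hcard⟩ := h δ hδ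
  refine (iInf₂_le R hR).trans ?_
  simp [elog_eq_zero_of_le_one (hcard _)]

lemma IsPseudoOrbit.mem_deltaComponent {δ : ℝ} {n : ℕ} {x₀ : X} {p : ℕ → X}
    (hp : IsPseudoOrbit id δ n x₀ p) {i : ℕ} (hi : i ≤ n) : p i ∈ deltaComponent δ x₀ :=
  ⟨i, p, hp.1, rfl, fun j hj => hp.2 j (hj.trans_le hi)⟩

end PseudoOrbit

/-- If every `δ`-component of a metric space `X` is bounded (for every
`δ > 0`), then the coarse entropy of `X` is zero. -/
theorem coarseEntropy_zero_of_bounded_components {X : Type*} [MetricSpace X]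
    (h : ∀ δ : ℝ, 0 < δ → ∀ x : X, Bornology.IsBounded (deltaComponent δ x)) (x₀ : X) :
    coarseEntropyAt (id : X → X) x₀ = 0 := by
  refine coarseEntropyAt_eq_zero_of_sepCard_le_one fun δ hδ =>
    ⟨diam (deltaComponent δ x₀) + 1, by positivity, fun n => sepCard_le_one ?_⟩
  intro p q hp hq
  have hclose : ∀ i ≤ n, dist (p i) (q i) ≤ diam (deltaComponent δ x₀) := fun i hi =>
    dist_le_diam_of_mem (h δ hδ x₀) (hp.mem_deltaComponent hi) (hq.mem_deltaComponent hi)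
  exact (orbitDist_le hclose).trans_lt (lt_add_one _)
end
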